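/- Let g ≥ 3 be an integer. The polynomial f(x,y,z) = 2(x^g + y^g)z^g − (x − y)² z^{2g} − (Σ_{i=0}^{g−1} x^{g−1−i} y^i)² is squarefree in the polynomial ring ℤ[x,y,z]; that is, there is no non-unit polynomial k ∈ ℤ[x,y,z] with k² dividing f. -/

import Mathlib

/-!
With `Q = x^g + y^g - (x-y)² z^g`, one has `∂f/∂z = 2g z^(g-1) Q` and
`(x-y)² f + Q² = 4 x^g y^g`. A prime `q` with `q² ∣ f` divides `∂f/∂z`, hence divides
`2g z^(g-1)` or `Q`, and in the latter case `4 x^g y^g`. So `q` is associated to a prime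
constant or to one of `x, y, z`; both are impossible because `f(1,0,0) = f(0,1,0) = -1`.
-/

open MvPolynomial

/-- `f(x,y,z) = 2(x^g+y^g)z^g - (x-y)² z^{2g} - (∑_{i=0}^{g-1} x^{g-1-i} y^i)²`
as an element of `ℤ[x,y,z]`. -/
noncomputable def fP (g : ℕ) : MvPolynomial (Fin 3) ℤ :=
  2 * (X 0 ^ g + X 1 ^ g) * X 2 ^ g - (X 0 - X 1) ^ 2 * X 2 ^ (2 * g)
    - (∑ i ∈ Finset.range g, X 0 ^ (g - 1 - i) * X 1 ^ i) ^ 2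

theorem Derivation.dvd_apply_of_mul_self_dvd {R A : Type*} [CommSemiring R] [CommSemiring A]
    [Algebra R A] (D : Derivation R A A) {a b : A} (h : a * a ∣ b) : a ∣ D b := by
  obtain ⟨c, rfl⟩ := h
  simp only [D.leibniz, smul_eq_mul]
  exact Dvd.intro (a * D c + 2 * c * D a) (by ring)

theorem sub_mul_sum_pow_mul_pow {R : Type*} [CommRing R] (a b : R) (n : ℕ) :
    (a - b) * ∑ i ∈ Finset.range n, a ^ (n - 1 - i) * b ^ i = a ^ n - b ^ n := by
  rw [Finset.sum_congr rfl fun i _ => mul_comm _ _, geom_sum₂_comm,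
    (Commute.all a b).mul_geom_sum₂]

namespace MvPolynomial

variable {σ R : Type*} [CommRing R] [IsDomain R] {p q : MvPolynomial σ R}

theorem isUnit_of_dvd_C_of_dvd {a : R} (ha : a ≠ 0) (hqa : q ∣ C a) (hqp : q ∣ p) (v : σ → R)
    (hv : IsUnit (eval v p)) : IsUnit q := by
  obtain ⟨b, -, rfl⟩ := (dvd_C_iff_exists ha).mp hqa
  have hb : b ∣ eval v p := by simpa using map_dvd (eval v) hqp
  exact (isUnit_of_dvd_unit hb hv).map C

theorem not_dvd_X_pow_of_eval_ne_zero (hq : Prime q) (hqp : q ∣ p) {i : σ} {v : σ → R}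
    (hv : v i = 0) (hp : eval v p ≠ 0) (n : ℕ) : ¬q ∣ X i ^ n := fun hqX => by
  have hXp : X i ∣ p :=
    ((hq.irreducible.associated_of_dvd X_prime.irreducible
      (hq.dvd_of_dvd_pow hqX)).dvd_iff_dvd_left).mp hqp
  exact hp (by simpa [hv] using map_dvd (eval v) hXp)

end MvPolynomial

noncomputable def fQ (g : ℕ) : MvPolynomial (Fin 3) ℤ :=
  X 0 ^ g + X 1 ^ g - (X 0 - X 1) ^ 2 * X 2 ^ g

theorem eval_fP_one_zero_zero {g : ℕ} (hg : g ≠ 0) : eval ![1, 0, 0] (fP g) = -1 := by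
  simp [fP, hg, zero_pow hg, Finset.sum_eq_single 0]

theorem eval_fP_zero_one_zero {g : ℕ} (hg : g ≠ 0) : eval ![0, 1, 0] (fP g) = -1 := by
  have hS : ∑ i ∈ Finset.range g, (0 : ℤ) ^ (g - 1 - i) = 1 := by
    rw [Finset.sum_range_reflect (fun i => (0 : ℤ) ^ i), zero_geom_sum, if_neg hg]
  simp [fP, hg, hS]

theorem fP_ne_zero {g : ℕ} (hg : g ≠ 0) : fP g ≠ 0 := fun h => by
  simpa [h] using eval_fP_one_zero_zero hg

theorem pderiv_two_fP (g : ℕ) : pderiv 2 (fP g) = C (2 * g : ℤ) * X 2 ^ (g - 1) * fQ g := by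
  have h2 : pderiv 2 (2 : MvPolynomial (Fin 3) ℤ) = 0 := by
    exact_mod_cast (pderiv 2).map_natCast 2
  rw [fP, fQ, pow_mul']
  simp only [Fin.isValue, map_sub, Derivation.leibniz, Derivation.leibniz_pow, pderiv_X,
    Pi.single_eq_same, smul_eq_mul, mul_one, nsmul_eq_mul, map_add, ne_eq, Fin.reduceEq,
    not_false_eq_true, Pi.single_eq_of_ne, mul_zero, add_zero, h2,
    Nat.add_one_sub_one, pow_one, Nat.cast_ofNat, sub_self, map_sum, Finset.sum_const_zero,
    sub_zero, eq_intCast, Int.cast_mul, Int.cast_ofNat, Int.cast_natCast]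
  ring

theorem sq_mul_fP_add_fQ_sq (g : ℕ) :
    (X 0 - X 1) ^ 2 * fP g + fQ g ^ 2 = C 4 * X 0 ^ g * X 1 ^ g := by
  have hS := sub_mul_sum_pow_mul_pow (X 0 : MvPolynomial (Fin 3) ℤ) (X 1) g
  rw [fP, fQ, map_ofNat]
  linear_combination (-(X 0 - X 1) * (∑ i ∈ Finset.range g, X 0 ^ (g - 1 - i) * X 1 ^ i)
    - (X 0 ^ g - X 1 ^ g)) * hS

theorem dvd_monomial_of_mul_self_dvd_fP {g : ℕ} {q : MvPolynomial (Fin 3) ℤ} (hq : Prime q)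
    (h : q * q ∣ fP g) : q ∣ C (2 * g : ℤ) * X 2 ^ (g - 1) * (C 4 * X 0 ^ g * X 1 ^ g) := by
  have hqD := (pderiv 2).dvd_apply_of_mul_self_dvd h
  rw [pderiv_two_fP] at hqD
  rcases hq.dvd_mul.mp hqD with hz | hQ
  · exact dvd_mul_of_dvd_left hz _
  · refine dvd_mul_of_dvd_right ?_ _
    rw [← sq_mul_fP_add_fQ_sq]
    exact dvd_add ((dvd_of_mul_left_dvd h).mul_left _) (dvd_pow hQ two_ne_zero)

theorem stmt7 (g : ℕ) (hg : 3 ≤ g) : Squarefree (fP g) := by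
  have hg0 : g ≠ 0 := by omega
  rw [squarefree_iff_irreducible_sq_not_dvd_of_ne_zero (fP_ne_zero hg0)]
  intro q hirr hqq
  have hq : Prime q := hirr.prime
  have hqf : q ∣ fP g := dvd_of_mul_left_dvd hqq
  have not_dvd_C (c : ℤ) (hc : c ≠ 0) : ¬q ∣ C c := fun hqc =>
    hq.not_isUnit (isUnit_of_dvd_C_of_dvd hc hqc hqf ![1, 0, 0]
      (by rw [eval_fP_one_zero_zero hg0]; exact isUnit_one.neg))
  have not_dvd_X (i : Fin 3) (v : Fin 3 → ℤ) (hv : v i = 0) (hf : eval v (fP g) = -1) (n : ℕ) :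
      ¬q ∣ X i ^ n :=
    not_dvd_X_pow_of_eval_ne_zero hq hqf hv (by rw [hf]; norm_num) n
  have h := dvd_monomial_of_mul_self_dvd_fP hq hqq
  simp only [hq.dvd_mul] at h
  rcases h with (h2g | hz) | ((h4 | hx) | hy)
  · exact not_dvd_C _ (by positivity) h2g
  · exact not_dvd_X 2 ![1, 0, 0] rfl (eval_fP_one_zero_zero hg0) _ hz
  · exact not_dvd_C 4 (by norm_num) h4
  · exact not_dvd_X 0 ![0, 1, 0] rfl (eval_fP_zero_one_zero hg0) _ hx
  · exact not_dvd_X 1 ![1, 0, 0] rfl (eval_fP_one_zero_zero hg0) _ hy
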